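/- arXiv:1706.02033 — 9 statements merged into one kernel-verified Lean document; each statement's English description precedes it below -/
import Mathlib

section
/- Let w1, w2, a, b, m be positive real numbers with a·b ≤ m and w2·b² ≥ w1·m. Then the infimum of w1·D1 + w2·D2 over the set S = {(D1,D2) ∈ ℝ² : D1 ≥ a, D2 ≥ b, D1·D2 ≥ m} equals w1·m/b + w2·b, and this infimum is attained at the point (m/b, b) ∈ S. -/
/-- The corner-point case of the weighted-sum distortion minimization
(Proposition 1 of the paper), stated as a general optimization lemma:
if `a·b ≤ m` and `w2·b² ≥ w1·m`, then the infimum of `w1·D1 + w2·D2` over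
`S = {(D1,D2) : D1 ≥ a, D2 ≥ b, D1·D2 ≥ m}` equals `w1·m/b + w2·b`,
attained at `(m/b, b) ∈ S`. -/
theorem corner_point_min (w1 w2 a b m : ℝ)
    (hw1 : 0 < w1) (hw2 : 0 < w2) (ha : 0 < a) (hb : 0 < b) (hm : 0 < m)
    (hab : a * b ≤ m) (hcorner : w1 * m ≤ w2 * b ^ 2) :
    (m / b, b) ∈ {D : ℝ × ℝ | a ≤ D.1 ∧ b ≤ D.2 ∧ m ≤ D.1 * D.2} ∧
    IsLeast ((fun D : ℝ × ℝ => w1 * D.1 + w2 * D.2) ''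
        {D : ℝ × ℝ | a ≤ D.1 ∧ b ≤ D.2 ∧ m ≤ D.1 * D.2})
      (w1 * (m / b) + w2 * b) := by
  have hmem : (m / b, b) ∈ {D : ℝ × ℝ | a ≤ D.1 ∧ b ≤ D.2 ∧ m ≤ D.1 * D.2} := by
    refine ⟨?_, le_refl b, ?_⟩
    · rw [le_div_iff₀ hb]; exact hab
    · rw [div_mul_cancel₀ _ hb.ne']
  refine ⟨hmem, ⟨(m / b, b), hmem, rfl⟩, ?_⟩
  rintro v ⟨⟨x, y⟩, ⟨hx, hy, hxy⟩, rfl⟩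
  simp only
  have hby : 0 < y := hb.trans_le hy
  have key : w1 * m / b ≤ w1 * x + w2 * y - w2 * b := by
    rw [div_le_iff₀ hb]
    have hA : 0 ≤ (y - b) * (w2 * b * y - w1 * m) := by
      apply mul_nonneg (sub_nonneg.2 hy)
      nlinarith [mul_le_mul_of_nonneg_left hy (mul_pos hw2 hb).le]
    have hB : w1 * b * m ≤ w1 * b * (x * y) :=
      mul_le_mul_of_nonneg_left hxy (mul_pos hw1 hb).le
    nlinarith [hA, hB, hby]
  rw [mul_div_assoc']
  linarith
end

section
/- Fix η with 0 < η < 1 and weights w1, w2 with 0 < w1 < w2 and w1 + w2 = 1. Let r1, r2 ≥ 0 and suppose w2·(d2min(r1,r2))² ≥ w1·d12min(r1,r2). Then the infimum of w1·D1 + w2·D2 over S(r1,r2) equals w1·d12min(r1,r2)/d2min(r1,r2) + w2·d2min(r1,r2), attained at the point (d12min/d2min, d2min). -/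
/-- `d1min(r1,r2) = (η̄ + η·2^{−2r2})·2^{−2r1}`. -/
noncomputable def d1min (η r1 r2 : ℝ) : ℝ :=
  ((1 - η) + η * (2 : ℝ) ^ (-2 * r2)) * (2 : ℝ) ^ (-2 * r1)

/-- `d2min(r1,r2) = (η̄ + η·2^{−2r1})·2^{−2r2}`. -/
noncomputable def d2min (η r1 r2 : ℝ) : ℝ :=
  ((1 - η) + η * (2 : ℝ) ^ (-2 * r1)) * (2 : ℝ) ^ (-2 * r2)

/-- `d12min(r1,r2) = (η̄ + η·2^{−2(r1+r2)})·2^{−2(r1+r2)}`. -/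
noncomputable def d12min (η r1 r2 : ℝ) : ℝ :=
  ((1 - η) + η * (2 : ℝ) ^ (-2 * (r1 + r2))) * (2 : ℝ) ^ (-2 * (r1 + r2))

/-- The feasible distortion set `S(r1,r2)`. -/
noncomputable def distSet (η r1 r2 : ℝ) : Set (ℝ × ℝ) :=
  {D | d1min η r1 r2 ≤ D.1 ∧ d2min η r1 r2 ≤ D.2 ∧ d12min η r1 r2 ≤ D.1 * D.2}

/-- The 'point D' branch of Proposition 1 of the paper: if
`w2·(d2min)² ≥ w1·d12min` then the infimum of `w1·D1 + w2·D2` over `S(r1,r2)`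
equals `w1·d12min/d2min + w2·d2min`, attained at `(d12min/d2min, d2min)`. -/
theorem pointD_branch (η w1 w2 r1 r2 : ℝ)
    (hη0 : 0 < η) (hη1 : η < 1)
    (hw0 : 0 < w1) (hw12 : w1 < w2) (hwsum : w1 + w2 = 1)
    (hr1 : 0 ≤ r1) (hr2 : 0 ≤ r2)
    (hD : w1 * d12min η r1 r2 ≤ w2 * (d2min η r1 r2) ^ 2) :
    (d12min η r1 r2 / d2min η r1 r2, d2min η r1 r2) ∈ distSet η r1 r2 ∧
    IsLeast ((fun D : ℝ × ℝ => w1 * D.1 + w2 * D.2) '' distSet η r1 r2)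
      (w1 * (d12min η r1 r2 / d2min η r1 r2) + w2 * d2min η r1 r2) := by
  set a : ℝ := (2 : ℝ) ^ (-2 * r1) with ha
  set b : ℝ := (2 : ℝ) ^ (-2 * r2) with hb
  have hapos : 0 < a := Real.rpow_pos_of_pos (by norm_num) _
  have hbpos : 0 < b := Real.rpow_pos_of_pos (by norm_num) _
  have hale : a ≤ 1 := by
    rw [ha]
    calc (2:ℝ) ^ (-2 * r1) ≤ (2:ℝ) ^ (0:ℝ) :=
      Real.rpow_le_rpow_of_exponent_le (by norm_num) (by linarith)
    _ = 1 := Real.rpow_zero 2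
  have hble : b ≤ 1 := by
    rw [hb]
    calc (2:ℝ) ^ (-2 * r2) ≤ (2:ℝ) ^ (0:ℝ) :=
      Real.rpow_le_rpow_of_exponent_le (by norm_num) (by linarith)
    _ = 1 := Real.rpow_zero 2
  have hab : (2 : ℝ) ^ (-2 * (r1 + r2)) = a * b := by
    rw [ha, hb, ← Real.rpow_add (by norm_num : (0:ℝ) < 2)]
    ring_nf
  have hd1 : d1min η r1 r2 = ((1 - η) + η * b) * a := rfl
  have hd2 : d2min η r1 r2 = ((1 - η) + η * a) * b := rfl
  have hd12 : d12min η r1 r2 = ((1 - η) + η * (a * b)) * (a * b) := by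
    rw [d12min, hab]
  have hcoef : 0 < (1 - η) + η * a := by nlinarith
  have hd2pos : 0 < d2min η r1 r2 := by
    rw [hd2]; exact mul_pos hcoef hbpos
  have hd12pos : 0 < d12min η r1 r2 := by
    rw [hd12]
    have : 0 < (1 - η) + η * (a * b) := by nlinarith
    exact mul_pos this (mul_pos hapos hbpos)
  have hkey : d1min η r1 r2 * d2min η r1 r2 ≤ d12min η r1 r2 := by
    rw [hd1, hd2, hd12]
    nlinarith [mul_nonneg (mul_pos hapos hbpos).le (mul_nonneg (mul_nonneg
      (mul_pos hη0 (by linarith : (0:ℝ) < 1 - η)).le (sub_nonneg.mpr hale))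
      (sub_nonneg.mpr hble))]
  have hmem : (d12min η r1 r2 / d2min η r1 r2, d2min η r1 r2) ∈ distSet η r1 r2 := by
    refine ⟨?_, le_refl _, ?_⟩
    · exact (le_div_iff₀ hd2pos).mpr hkey
    · simp only
      rw [div_mul_cancel₀ _ (ne_of_gt hd2pos)]
  refine ⟨hmem, ⟨⟨_, hmem, rfl⟩, ?_⟩⟩
  rintro x ⟨⟨D1, D2⟩, ⟨h1, h2, h12⟩, rfl⟩
  simp only [distSet, Set.mem_setOf_eq] at h1 h2 h12 ⊢
  have hD2pos : 0 < D2 := lt_of_lt_of_le hd2pos h2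
  have hw2 : 0 < w2 := by linarith
  rw [← sub_nonneg]
  have hrw : w1 * D1 + w2 * D2 - (w1 * (d12min η r1 r2 / d2min η r1 r2) + w2 * d2min η r1 r2)
      = (w1 * D1 * d2min η r1 r2 + w2 * D2 * d2min η r1 r2 - w1 * d12min η r1 r2
          - w2 * (d2min η r1 r2) ^ 2) / d2min η r1 r2 := by
    field_simp
    ring
  rw [hrw]
  apply div_nonneg _ hd2pos.le
  have hB : 0 ≤ w2 * d2min η r1 r2 * D2 - w1 * d12min η r1 r2 := by
    nlinarith [mul_le_mul_of_nonneg_left h2 (mul_nonneg hw2.le hd2pos.le)]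
  nlinarith [mul_nonneg (mul_nonneg hw0.le hd2pos.le) (sub_nonneg.mpr h12),
    mul_nonneg (sub_nonneg.mpr h2) hB, hD2pos, hd2pos]
end

section
/- Fix η with 0 < η < 1 and weights w1, w2 with 0 < w1 < w2 and w1 + w2 = 1. Let r1, r2 ≥ 0 and suppose w2·(d2min(r1,r2))² ≤ w1·d12min(r1,r2) and w1·(d1min(r1,r2))² ≤ w2·d12min(r1,r2). Then the infimum of w1·D1 + w2·D2 over S(r1,r2) equals 2·√(w1·w2·d12min(r1,r2)), attained at the point (√(w2·d12min/w1), √(w1·d12min/w2)). -/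
lemma d1min_nonneg {η : ℝ} (hη0 : 0 ≤ η) (hη1 : η ≤ 1) (r1 r2 : ℝ) : 0 ≤ d1min η r1 r2 := by
  have : 0 ≤ 1 - η := by linarith
  unfold d1min
  positivity

lemma d2min_nonneg {η : ℝ} (hη0 : 0 ≤ η) (hη1 : η ≤ 1) (r1 r2 : ℝ) : 0 ≤ d2min η r1 r2 :=
  d1min_nonneg hη0 hη1 r2 r1

def quadrantAboveHyperbola (p q c : ℝ) : Set (ℝ × ℝ) :=
  {D | p ≤ D.1 ∧ q ≤ D.2 ∧ c ≤ D.1 * D.2}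

lemma distSet_eq_quadrantAboveHyperbola (η r1 r2 : ℝ) :
    distSet η r1 r2 = quadrantAboveHyperbola (d1min η r1 r2) (d2min η r1 r2) (d12min η r1 r2) :=
  rfl

section WeightedSum

variable {a b c p q : ℝ}

lemma two_sqrt_mul_le_add_of_le_mul {x y : ℝ} (ha : 0 ≤ a) (hb : 0 ≤ b) (hx : 0 ≤ x) (hy : 0 ≤ y)
    (hc : c ≤ x * y) : 2 * √(a * b * c) ≤ a * x + b * y := by
  have hamgm : 4 * (a * b * c) ≤ (a * x + b * y) ^ 2 := calc
    4 * (a * b * c) ≤ 4 * (a * b * (x * y)) := by gcongr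
    _ = 4 * (a * x) * (b * y) := by ring
    _ ≤ (a * x + b * y) ^ 2 := four_mul_le_sq_add _ _
  calc 2 * √(a * b * c) = √(4 * (a * b * c)) := by
        rw [show (4 : ℝ) = 2 ^ 2 by norm_num, Real.sqrt_mul (sq_nonneg 2), Real.sqrt_sq two_pos.le]
    _ ≤ √((a * x + b * y) ^ 2) := Real.sqrt_le_sqrt hamgm
    _ = a * x + b * y := Real.sqrt_sq (by positivity)

lemma sqrt_div_mul_sqrt_div (ha : 0 < a) (hb : 0 < b) (hc : 0 ≤ c) :
    √(b * c / a) * √(a * c / b) = c := by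
  rw [← Real.sqrt_mul (by positivity), show b * c / a * (a * c / b) = c ^ 2 by field_simp,
    Real.sqrt_sq hc]

lemma mul_sqrt_div (ha : 0 < a) : a * √(b * c / a) = √(a * b * c) := by
  calc a * √(b * c / a) = √(a ^ 2) * √(b * c / a) := by rw [Real.sqrt_sq ha.le]
    _ = √(a * b * c) := by
      rw [← Real.sqrt_mul (sq_nonneg a)]
      congr 1
      field_simp

lemma le_sqrt_div_of_mul_sq_le (ha : 0 < a) (h : a * p ^ 2 ≤ b * c) : p ≤ √(b * c / a) :=
  Real.le_sqrt_of_sq_le ((le_div_iff₀ ha).2 (by linarith))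

/-- `(√(b c / a), √(a c / b))` is where the line `a x + b y = 2 √(a b c)` touches the
hyperbola `x y = c`; the hypotheses put this point inside the quadrant `p ≤ x, q ≤ y`. -/
theorem isLeast_weightedSum_quadrantAboveHyperbola (ha : 0 < a) (hb : 0 < b) (hp : 0 ≤ p) (hq : 0 ≤ q)
    (hpc : a * p ^ 2 ≤ b * c) (hqc : b * q ^ 2 ≤ a * c) :
    (√(b * c / a), √(a * c / b)) ∈ quadrantAboveHyperbola p q c ∧
    IsLeast ((fun D : ℝ × ℝ => a * D.1 + b * D.2) '' quadrantAboveHyperbola p q c)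
      (2 * √(a * b * c)) := by
  have hc : 0 ≤ c := nonneg_of_mul_nonneg_right ((mul_nonneg ha.le (sq_nonneg p)).trans hpc) hb
  have hmem : (√(b * c / a), √(a * c / b)) ∈ quadrantAboveHyperbola p q c :=
    ⟨le_sqrt_div_of_mul_sq_le ha hpc, le_sqrt_div_of_mul_sq_le hb hqc,
      (sqrt_div_mul_sqrt_div ha hb hc).ge⟩
  refine ⟨hmem, ⟨_, hmem, ?_⟩, ?_⟩
  · dsimp only
    rw [mul_sqrt_div ha, mul_sqrt_div hb, mul_comm b a]
    ring
  · rintro _ ⟨⟨x, y⟩, ⟨hx, hy, hxy⟩, rfl⟩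
    exact two_sqrt_mul_le_add_of_le_mul ha.le hb.le (hp.trans hx) (hq.trans hy) hxy

end WeightedSum

theorem curveMD_branch_general (η w1 w2 r1 r2 : ℝ)
    (hη0 : 0 < η) (hη1 : η < 1)
    (hw0 : 0 < w1) (hw12 : w1 < w2)
    (hMD : w2 * (d2min η r1 r2) ^ 2 ≤ w1 * d12min η r1 r2)
    (hMD' : w1 * (d1min η r1 r2) ^ 2 ≤ w2 * d12min η r1 r2) :
    (Real.sqrt (w2 * d12min η r1 r2 / w1), Real.sqrt (w1 * d12min η r1 r2 / w2)) ∈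
        distSet η r1 r2 ∧
    IsLeast ((fun D : ℝ × ℝ => w1 * D.1 + w2 * D.2) '' distSet η r1 r2)
      (2 * Real.sqrt (w1 * w2 * d12min η r1 r2)) := by
  rw [distSet_eq_quadrantAboveHyperbola]
  exact isLeast_weightedSum_quadrantAboveHyperbola hw0 (hw0.trans hw12) (d1min_nonneg hη0.le hη1.le r1 r2)
    (d2min_nonneg hη0.le hη1.le r1 r2) hMD' hMD

/-- The tangent ('curve MD') branch of Proposition 1 of the paper: if
`w2·(d2min)² ≤ w1·d12min` and `w1·(d1min)² ≤ w2·d12min`, then the infimum of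
`w1·D1 + w2·D2` over `S(r1,r2)` equals `2·√(w1·w2·d12min)`, attained at
`(√(w2·d12min/w1), √(w1·d12min/w2))`. -/
theorem curveMD_branch (η w1 w2 r1 r2 : ℝ)
    (hη0 : 0 < η) (hη1 : η < 1)
    (hw0 : 0 < w1) (hw12 : w1 < w2) (hwsum : w1 + w2 = 1)
    (hr1 : 0 ≤ r1) (hr2 : 0 ≤ r2)
    (hMD : w2 * (d2min η r1 r2) ^ 2 ≤ w1 * d12min η r1 r2)
    (hMD' : w1 * (d1min η r1 r2) ^ 2 ≤ w2 * d12min η r1 r2) :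
    (Real.sqrt (w2 * d12min η r1 r2 / w1), Real.sqrt (w1 * d12min η r1 r2 / w2)) ∈
        distSet η r1 r2 ∧
    IsLeast ((fun D : ℝ × ℝ => w1 * D.1 + w2 * D.2) '' distSet η r1 r2)
      (2 * Real.sqrt (w1 * w2 * d12min η r1 r2)) :=
  curveMD_branch_general η w1 w2 r1 r2 hη0 hη1 hw0 hw12 hMD hMD'
end

section
/- Fix η with 0 < η < 1, η̄ = 1 − η, and weights w1, w2 with 0 < w1 < w2 and w1 + w2 = 1. Then: (i) for every r ≥ 0 one has w2·(η̄ + η·2^{−2r})² − w1·η·2^{−4r} > 0, so that g(r) = −(1/2)·log2( w1·η̄·2^{−2r} / ( w2·(η̄ + η·2^{−2r})² − w1·η·2^{−4r} ) ) is well defined; and (ii) for all r1, r2 ≥ 0, the inequality r2 ≤ g(r1) holds if and only if w2·(d2min(r1,r2))² ≥ w1·d12min(r1,r2). -/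
/-- The threshold function `g` of Propositions 1 and 3 of the paper. -/
noncomputable def gThresh (η w1 w2 r : ℝ) : ℝ :=
  -(1 / 2) * Real.logb 2
    (w1 * (1 - η) * (2 : ℝ) ^ (-2 * r) /
      (w2 * ((1 - η) + η * (2 : ℝ) ^ (-2 * r)) ^ 2 - w1 * η * (2 : ℝ) ^ (-4 * r)))

/-! The substitution `t = 2^{-2 r₁}`, `s = 2^{-2 r₂}` turns both claims into polynomial
inequalities in `t, s ∈ (0, 1]`. For (i), `(η̄ + η t)² - η t² = η̄² + η̄ η t (2 - t) > 0`, and the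
weight `w₂ ≥ w₁` only helps. For (ii), `r₂ ≤ g(r₁)` unwinds to `w₁ η̄ t ≤ D(t) s`, with `D(t)` the
denominator of `g`, and `w₂ d2min² - w₁ d12min` is exactly `s (D(t) s - w₁ η̄ t)`. -/

lemma rpow_neg_four_mul_eq_sq {b : ℝ} (hb : 0 ≤ b) (r : ℝ) :
    b ^ (-4 * r) = (b ^ (-2 * r)) ^ 2 := by
  rw [show -4 * r = -2 * r * 2 by ring, Real.rpow_mul hb, Real.rpow_two]

lemma rpow_neg_two_mul_add {b : ℝ} (hb : 0 < b) (r₁ r₂ : ℝ) :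
    b ^ (-2 * (r₁ + r₂)) = b ^ (-2 * r₁) * b ^ (-2 * r₂) := by
  rw [← Real.rpow_add hb]; ring_nf

lemma rpow_neg_two_mul_le_one {b : ℝ} (hb : 1 ≤ b) {r : ℝ} (hr : 0 ≤ r) : b ^ (-2 * r) ≤ 1 :=
  Real.rpow_le_one_of_one_le_of_nonpos hb (by linarith)

lemma le_neg_half_mul_logb_iff {b x : ℝ} (hb : 1 < b) (hx : 0 < x) (r : ℝ) :
    r ≤ -(1 / 2) * Real.logb b x ↔ x ≤ b ^ (-2 * r) := by
  rw [← Real.logb_le_iff_le_rpow hb hx]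
  constructor <;> intro h <;> linarith

lemma mul_sq_lt_sq_one_sub_add_mul {η t : ℝ} (hη0 : 0 < η) (hη1 : η < 1) (ht0 : 0 ≤ t)
    (ht2 : t ≤ 2) : η * t ^ 2 < ((1 - η) + η * t) ^ 2 := by
  have hη' : 0 < 1 - η := sub_pos.mpr hη1
  have hcross : 0 ≤ (1 - η) * η * t * (2 - t) := by
    have := mul_nonneg (mul_nonneg (mul_pos hη' hη0).le ht0) (sub_nonneg.mpr ht2)
    linarith
  nlinarith [pow_pos hη' 2]

lemma threshold_denom_pos {η w₁ w₂ t : ℝ} (hη0 : 0 < η) (hη1 : η < 1) (hw₁ : 0 < w₁)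
    (hw : w₁ ≤ w₂) (ht0 : 0 ≤ t) (ht2 : t ≤ 2) :
    0 < w₂ * ((1 - η) + η * t) ^ 2 - w₁ * η * t ^ 2 := by
  have hlt := mul_lt_mul_of_pos_left (mul_sq_lt_sq_one_sub_add_mul hη0 hη1 ht0 ht2) hw₁
  have hle := mul_le_mul_of_nonneg_right hw (sq_nonneg ((1 - η) + η * t))
  nlinarith

lemma threshold_iff {η w₁ w₂ t s : ℝ} (hs : 0 < s) :
    w₁ * (1 - η) * t ≤ s * (w₂ * ((1 - η) + η * t) ^ 2 - w₁ * η * t ^ 2) ↔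
      w₁ * (((1 - η) + η * (t * s)) * (t * s)) ≤ w₂ * (((1 - η) + η * t) * s) ^ 2 := by
  have hfactor : w₂ * (((1 - η) + η * t) * s) ^ 2 - w₁ * (((1 - η) + η * (t * s)) * (t * s)) =
      s * (s * (w₂ * ((1 - η) + η * t) ^ 2 - w₁ * η * t ^ 2) - w₁ * (1 - η) * t) := by
    ring
  rw [← sub_nonneg (a := w₂ * _), hfactor, mul_nonneg_iff_of_pos_left hs, sub_nonneg]

theorem gThresh_well_defined_and_characterizes_general (η w1 w2 : ℝ)
    (hη0 : 0 < η) (hη1 : η < 1)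
    (hw0 : 0 < w1) (hw12 : w1 < w2) :
    (∀ r : ℝ, 0 ≤ r →
      0 < w2 * ((1 - η) + η * (2 : ℝ) ^ (-2 * r)) ^ 2 - w1 * η * (2 : ℝ) ^ (-4 * r)) ∧
    (∀ r1 r2 : ℝ, 0 ≤ r1 → 0 ≤ r2 →
      (r2 ≤ gThresh η w1 w2 r1 ↔
        w1 * d12min η r1 r2 ≤ w2 * (d2min η r1 r2) ^ 2)) := by
  have ht : ∀ r : ℝ, 0 ≤ r → 0 ≤ (2 : ℝ) ^ (-2 * r) ∧ (2 : ℝ) ^ (-2 * r) ≤ 2 := fun r hr =>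
    ⟨by positivity, (rpow_neg_two_mul_le_one one_le_two hr).trans one_le_two⟩
  have hdenom : ∀ r : ℝ, 0 ≤ r →
      0 < w2 * ((1 - η) + η * (2 : ℝ) ^ (-2 * r)) ^ 2 - w1 * η * (2 : ℝ) ^ (-4 * r) := by
    intro r hr
    rw [rpow_neg_four_mul_eq_sq zero_le_two]
    exact threshold_denom_pos hη0 hη1 hw0 hw12.le (ht r hr).1 (ht r hr).2
  refine ⟨hdenom, fun r1 r2 hr1 _ => ?_⟩
  have hnum : 0 < w1 * (1 - η) * (2 : ℝ) ^ (-2 * r1) := by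
    have := sub_pos.mpr hη1
    positivity
  rw [gThresh, le_neg_half_mul_logb_iff one_lt_two (div_pos hnum (hdenom r1 hr1)),
    div_le_iff₀ (hdenom r1 hr1), d12min, d2min, rpow_neg_two_mul_add two_pos,
    rpow_neg_four_mul_eq_sq zero_le_two]
  exact threshold_iff (by positivity)

/-- The analytic content of the threshold function `g`:
(i) its denominator is strictly positive for every `r ≥ 0`, so `g` is well
defined, and (ii) for `r1, r2 ≥ 0`, `r2 ≤ g(r1)` iff
`w2·(d2min(r1,r2))² ≥ w1·d12min(r1,r2)`. -/
theorem gThresh_well_defined_and_characterizes (η w1 w2 : ℝ)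
    (hη0 : 0 < η) (hη1 : η < 1)
    (hw0 : 0 < w1) (hw12 : w1 < w2) (hwsum : w1 + w2 = 1) :
    (∀ r : ℝ, 0 ≤ r →
      0 < w2 * ((1 - η) + η * (2 : ℝ) ^ (-2 * r)) ^ 2 - w1 * η * (2 : ℝ) ^ (-4 * r)) ∧
    (∀ r1 r2 : ℝ, 0 ≤ r1 → 0 ≤ r2 →
      (r2 ≤ gThresh η w1 w2 r1 ↔
        w1 * d12min η r1 r2 ≤ w2 * (d2min η r1 r2) ^ 2)) :=
  gThresh_well_defined_and_characterizes_general η w1 w2 hη0 hη1 hw0 hw12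
end

section
/- Fix η with 0 < η < 1 and η̄ = 1 − η. For all r1, r2 ≥ 0 one has d1min(r1,r2)·d2min(r1,r2) ≤ d12min(r1,r2), with equality if and only if r1 = 0 or r2 = 0. -/
/-- For `r1, r2 ≥ 0` one has `d1min·d2min ≤ d12min`, with equality iff
`r1 = 0` or `r2 = 0`.  This guarantees that the corner point
`(d12min/d2min, d2min)` of the distortion region satisfies `D1 ≥ d1min`. -/
theorem d1min_mul_d2min_le_d12min (η : ℝ) (hη0 : 0 < η) (hη1 : η < 1)
    (r1 r2 : ℝ) (hr1 : 0 ≤ r1) (hr2 : 0 ≤ r2) :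
    d1min η r1 r2 * d2min η r1 r2 ≤ d12min η r1 r2 ∧
    (d1min η r1 r2 * d2min η r1 r2 = d12min η r1 r2 ↔ r1 = 0 ∨ r2 = 0) := by
  set a : ℝ := (2 : ℝ) ^ (-2 * r1) with hadef
  set b : ℝ := (2 : ℝ) ^ (-2 * r2) with hbdef
  have ha : 0 < a := Real.rpow_pos_of_pos (by norm_num) _
  have hb : 0 < b := Real.rpow_pos_of_pos (by norm_num) _
  have ha1 : a ≤ 1 := Real.rpow_le_one_of_one_le_of_nonpos (by norm_num) (by linarith)
  have hb1 : b ≤ 1 := Real.rpow_le_one_of_one_le_of_nonpos (by norm_num) (by linarith)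
  have hab : (2 : ℝ) ^ (-2 * (r1 + r2)) = a * b := by
    rw [hadef, hbdef, ← Real.rpow_add (by norm_num)]; ring_nf
  have key : d12min η r1 r2 - d1min η r1 r2 * d2min η r1 r2
      = η * (1 - η) * (1 - a) * (1 - b) * (a * b) := by
    simp only [d1min, d2min, d12min, hab]; ring
  have hp : 0 ≤ η * (1 - η) * (1 - a) * (1 - b) * (a * b) :=
    mul_nonneg (mul_nonneg (mul_nonneg (mul_nonneg hη0.le (by linarith))
      (by linarith)) (by linarith)) (mul_pos ha hb).le
  constructor
  · linarith [key]
  · have hiff : d1min η r1 r2 * d2min η r1 r2 = d12min η r1 r2 ↔ a = 1 ∨ b = 1 := by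
      constructor
      · intro h
        have h0 : η * (1 - η) * (1 - a) * (1 - b) * (a * b) = 0 := by
          rw [← key, h]; ring
        rcases mul_eq_zero.mp h0 with h1 | h1
        · rcases mul_eq_zero.mp h1 with h2 | h2
          · rcases mul_eq_zero.mp h2 with h3 | h3
            · exfalso; nlinarith
            · left; linarith
          · right; linarith
        · exfalso; nlinarith
      · intro h
        have h0 : η * (1 - η) * (1 - a) * (1 - b) * (a * b) = 0 := by
          rcases h with h | h <;> rw [h] <;> ring
        linarith [key]
    rw [hiff]
    have e1 : a = 1 ↔ r1 = 0 := by
      constructor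
      · intro h
        by_contra hne
        have hpos : 0 < r1 := lt_of_le_of_ne hr1 (Ne.symm hne)
        have := Real.rpow_lt_one_of_one_lt_of_neg (x := 2) (by norm_num)
          (by linarith : -2 * r1 < 0)
        rw [← hadef, h] at this; linarith
      · intro h; rw [hadef, h]; norm_num
    have e2 : b = 1 ↔ r2 = 0 := by
      constructor
      · intro h
        by_contra hne
        have hpos : 0 < r2 := lt_of_le_of_ne hr2 (Ne.symm hne)
        have := Real.rpow_lt_one_of_one_lt_of_neg (x := 2) (by norm_num)
          (by linarith : -2 * r2 < 0)
        rw [← hbdef, h] at this; linarith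
      · intro h; rw [hbdef, h]; norm_num
    rw [e1, e2]
end

section
/- Fix η with 0 < η < 1, η̄ = 1 − η, and positive weights w1, w2. The function (r1, r2) ↦ 2·√( w1·w2·(η̄ + η·2^{−2·(r1+r2)})·2^{−2·(r1+r2)} ) is convex on [0,∞)² and nonincreasing in each coordinate. -/
open Real Set

lemma cs2 (a b c d : ℝ) : a*c + b*d ≤ Real.sqrt (a^2+b^2) * Real.sqrt (c^2+d^2) := by
  rcases le_or_gt (a*c + b*d) 0 with h | h
  · exact h.trans (by positivity)
  · rw [← Real.sqrt_mul (by positivity)]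
    rw [show a*c+b*d = Real.sqrt ((a*c+b*d)^2) from (Real.sqrt_sq h.le).symm]
    exact Real.sqrt_le_sqrt (by nlinarith [sq_nonneg (a*d - b*c)])

lemma mink2 (a b c d : ℝ) :
    Real.sqrt ((a+c)^2+(b+d)^2) ≤ Real.sqrt (a^2+b^2) + Real.sqrt (c^2+d^2) := by
  have h : (a+c)^2+(b+d)^2 ≤ (Real.sqrt (a^2+b^2) + Real.sqrt (c^2+d^2))^2 := by
    have h1 := cs2 a b c d
    have h2 : Real.sqrt (a^2+b^2) ^ 2 = a^2+b^2 := Real.sq_sqrt (by positivity)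
    have h3 : Real.sqrt (c^2+d^2) ^ 2 = c^2+d^2 := Real.sq_sqrt (by positivity)
    nlinarith
  calc Real.sqrt ((a+c)^2+(b+d)^2)
      ≤ Real.sqrt ((Real.sqrt (a^2+b^2) + Real.sqrt (c^2+d^2))^2) := Real.sqrt_le_sqrt h
    _ = _ := Real.sqrt_sq (by positivity)

lemma convex_exp_mul (c : ℝ) : ConvexOn ℝ Set.univ (fun s : ℝ => Real.exp (c * s)) := by
  refine ⟨convex_univ, ?_⟩
  intro x _ y _ a b ha hb hab
  have := convexOn_exp.2 (Set.mem_univ (c*x)) (Set.mem_univ (c*y)) ha hb hab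
  simpa [smul_eq_mul, mul_add, mul_comm, mul_left_comm, mul_assoc] using this

lemma conv_sqrt_sq_add_sq {P Q : ℝ → ℝ} (hP : ConvexOn ℝ Set.univ P) (hQ : ConvexOn ℝ Set.univ Q)
    (hP0 : ∀ s, 0 ≤ P s) (hQ0 : ∀ s, 0 ≤ Q s) :
    ConvexOn ℝ Set.univ (fun s => Real.sqrt ((P s)^2 + (Q s)^2)) := by
  refine ⟨convex_univ, ?_⟩
  intro x _ y _ a b ha hb hab
  simp only [smul_eq_mul]
  have h1 : P (a*x+b*y) ≤ a*P x + b*P y := by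
    simpa [smul_eq_mul] using hP.2 (Set.mem_univ x) (Set.mem_univ y) ha hb hab
  have h2 : Q (a*x+b*y) ≤ a*Q x + b*Q y := by
    simpa [smul_eq_mul] using hQ.2 (Set.mem_univ x) (Set.mem_univ y) ha hb hab
  have step1 : Real.sqrt ((P (a*x+b*y))^2 + (Q (a*x+b*y))^2)
      ≤ Real.sqrt ((a*P x + b*P y)^2 + (a*Q x + b*Q y)^2) :=
    Real.sqrt_le_sqrt (add_le_add (pow_le_pow_left₀ (hP0 _) h1 2) (pow_le_pow_left₀ (hQ0 _) h2 2))
  have step2 : Real.sqrt ((a*P x + b*P y)^2 + (a*Q x + b*Q y)^2)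
      ≤ Real.sqrt ((a*P x)^2 + (a*Q x)^2) + Real.sqrt ((b*P y)^2 + (b*Q y)^2) :=
    mink2 (a*P x) (a*Q x) (b*P y) (b*Q y)
  have e1 : Real.sqrt ((a*P x)^2 + (a*Q x)^2) = a * Real.sqrt ((P x)^2 + (Q x)^2) := by
    rw [show (a*P x)^2 + (a*Q x)^2 = a^2 * ((P x)^2 + (Q x)^2) by ring,
      Real.sqrt_mul (sq_nonneg a), Real.sqrt_sq ha]
  have e2 : Real.sqrt ((b*P y)^2 + (b*Q y)^2) = b * Real.sqrt ((P y)^2 + (Q y)^2) := by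
    rw [show (b*P y)^2 + (b*Q y)^2 = b^2 * ((P y)^2 + (Q y)^2) by ring,
      Real.sqrt_mul (sq_nonneg b), Real.sqrt_sq hb]
  calc Real.sqrt ((P (a*x+b*y))^2 + (Q (a*x+b*y))^2)
      ≤ Real.sqrt ((a*P x + b*P y)^2 + (a*Q x + b*Q y)^2) := step1
    _ ≤ _ := by rw [← e1, ← e2] at *; exact step2

lemma g_convex (A B k l : ℝ) (hA : 0 ≤ A) (hB : 0 ≤ B) :
    ConvexOn ℝ Set.univ
      (fun s : ℝ => 2 * Real.sqrt ((A * Real.exp (k*s))^2 + (B * Real.exp (l*s))^2)) := by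
  have hP : ConvexOn ℝ Set.univ (fun s : ℝ => A * Real.exp (k*s)) := by
    simpa [smul_eq_mul] using (convex_exp_mul k).smul hA
  have hQ : ConvexOn ℝ Set.univ (fun s : ℝ => B * Real.exp (l*s)) := by
    simpa [smul_eq_mul] using (convex_exp_mul l).smul hB
  have := (conv_sqrt_sq_add_sq hP hQ (fun s => by positivity) (fun s => by positivity)).smul
    (by norm_num : (0:ℝ) ≤ 2)
  simpa [smul_eq_mul] using this


lemma d12min_eq (η w1 w2 : ℝ) (hη0 : 0 < η) (hη1 : η < 1) (hw1 : 0 < w1) (hw2 : 0 < w2)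
    (r1 r2 : ℝ) :
    w1 * w2 * d12min η r1 r2 =
      (Real.sqrt (w1*w2*(1-η)) * Real.exp ((-Real.log 2)*(r1+r2)))^2 +
      (Real.sqrt (w1*w2*η) * Real.exp ((-(2*Real.log 2))*(r1+r2)))^2 := by
  have hsq : ∀ u : ℝ, Real.exp u ^ 2 = Real.exp (2*u) := fun u => by
    rw [pow_two, ← Real.exp_add]; ring_nf
  have e1 : (2:ℝ)^(-2*(r1+r2)) = Real.exp ((-Real.log 2)*(r1+r2)) ^ 2 := by
    rw [Real.rpow_def_of_pos two_pos, hsq]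
    congr 1; ring
  have e2 : (Real.exp ((-Real.log 2)*(r1+r2)) ^ 2) ^ 2 = Real.exp ((-(2*Real.log 2))*(r1+r2)) ^ 2 := by
    rw [hsq ((-Real.log 2)*(r1+r2)), hsq, hsq]; congr 1; ring
  simp only [d12min, mul_pow, Real.sq_sqrt ((mul_pos (mul_pos hw1 hw2) (by linarith : (0:ℝ) < 1-η)).le),
    Real.sq_sqrt (by positivity : (0:ℝ) ≤ w1*w2*η), e1]
  linear_combination (η*w1*w2) * e2

lemma d12min_mono (η : ℝ) (hη0 : 0 < η) (hη1 : η < 1) {r1 r2 r1' r2' : ℝ}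
    (h : r1 + r2 ≤ r1' + r2') : d12min η r1' r2' ≤ d12min η r1 r2 := by
  unfold d12min
  have ht : (2:ℝ)^(-2*(r1'+r2')) ≤ (2:ℝ)^(-2*(r1+r2)) :=
    Real.rpow_le_rpow_of_exponent_le one_le_two (by linarith)
  have ht0 : (0:ℝ) < (2:ℝ)^(-2*(r1'+r2')) := Real.rpow_pos_of_pos two_pos _
  have ht1 : (0:ℝ) < (2:ℝ)^(-2*(r1+r2)) := Real.rpow_pos_of_pos two_pos _
  apply mul_le_mul (by nlinarith) ht ht0.le (by nlinarith)

/-- The branch value `D^MD(r1,r2) = 2·√(w1·w2·d12min(r1,r2))` of the minimum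
weighted-sum distortion (Proposition 1 of the paper) is convex on `[0,∞)²`
and nonincreasing in each coordinate. -/
theorem DMD_convex_antitone (η w1 w2 : ℝ) (hη0 : 0 < η) (hη1 : η < 1)
    (hw1 : 0 < w1) (hw2 : 0 < w2) :
    ConvexOn ℝ (Set.Ici (0 : ℝ) ×ˢ Set.Ici (0 : ℝ))
      (fun p : ℝ × ℝ => 2 * Real.sqrt (w1 * w2 * d12min η p.1 p.2)) ∧
    (∀ r1 r1' r2 : ℝ, 0 ≤ r1 → r1 ≤ r1' → 0 ≤ r2 →
      2 * Real.sqrt (w1 * w2 * d12min η r1' r2) ≤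
        2 * Real.sqrt (w1 * w2 * d12min η r1 r2)) ∧
    (∀ r1 r2 r2' : ℝ, 0 ≤ r1 → 0 ≤ r2 → r2 ≤ r2' →
      2 * Real.sqrt (w1 * w2 * d12min η r1 r2') ≤
        2 * Real.sqrt (w1 * w2 * d12min η r1 r2)) := by
  have hmono : ∀ {r1 r2 r1' r2' : ℝ}, r1 + r2 ≤ r1' + r2' →
      2 * Real.sqrt (w1 * w2 * d12min η r1' r2') ≤ 2 * Real.sqrt (w1 * w2 * d12min η r1 r2) := by
    intro r1 r2 r1' r2' h
    have := d12min_mono η hη0 hη1 h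
    gcongr
  refine ⟨?_, fun r1 r1' r2 _ h _ => hmono (by linarith), fun r1 r2 r2' _ _ h => hmono (by linarith)⟩
  have hg := g_convex (Real.sqrt (w1*w2*(1-η))) (Real.sqrt (w1*w2*η)) (-Real.log 2)
    (-(2*Real.log 2)) (Real.sqrt_nonneg _) (Real.sqrt_nonneg _)
  refine ⟨(convex_Ici 0).prod (convex_Ici 0), ?_⟩
  intro p _ q _ a b ha hb hab
  have key := hg.2 (Set.mem_univ (p.1+p.2)) (Set.mem_univ (q.1+q.2)) ha hb hab
  simp only [smul_eq_mul] at key ⊢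
  rw [d12min_eq η w1 w2 hη0 hη1 hw1 hw2, d12min_eq η w1 w2 hη0 hη1 hw1 hw2,
    d12min_eq η w1 w2 hη0 hη1 hw1 hw2]
  have harg : (a • p + b • q).1 + (a • p + b • q).2 = a*(p.1+p.2) + b*(q.1+q.2) := by
    simp [Prod.smul_fst, Prod.smul_snd, smul_eq_mul]; ring
  rw [harg]
  exact key
end

section
/- Fix η with 0 < η < 1 and weights w1, w2 with 0 < w1 < w2 and w1 + w2 = 1. Define D(r1,r2) as the infimum of w1·D1 + w2·D2 over (D1,D2) ∈ S(r1,r2). Then D is a real-valued convex function on [0,∞)² which is nonincreasing in each coordinate. -/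
/-- The minimum weighted-sum distortion at coding rates `(r1,r2)`:
`D(r1,r2) = inf { w1·D1 + w2·D2 : (D1,D2) ∈ S(r1,r2) }`. -/
noncomputable def Dmin (η w1 w2 r1 r2 : ℝ) : ℝ :=
  sInf ((fun D : ℝ × ℝ => w1 * D.1 + w2 * D.2) '' distSet η r1 r2)

/-!
Each constraint defining `S(r)` is convex jointly in `(r, D)`. Indeed `d1min` and `d2min` are
nonnegative combinations of `2^{-2ℓ(r)}` for linear forms `ℓ`; and on the positive quadrant the
product constraint reads `√d12min(r) ≤ √(D1 D2)`, where the geometric mean is concave while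
`√d12min` is convex in `r1 + r2`, being log-convex because `x ↦ log (η̄ + η eˣ)` is convex.
Minimising a linear functional over the fibres of a convex set gives a convex function.
Monotonicity holds because all three lower bounds decrease in each rate, so `S(r)` grows.
-/

open Set Real

section FiberInf

variable {E F : Type*} [AddCommGroup E] [Module ℝ E] [AddCommGroup F] [Module ℝ F]

theorem Convex.convexOn_sInf_image_fiber {C : Set (E × F)} (hC : Convex ℝ C) {g : F → ℝ}
    (hg : ConvexOn ℝ univ g) {s : Set E} (hs : Convex ℝ s)
    (hne : ∀ x ∈ s, {y | (x, y) ∈ C}.Nonempty)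
    (hbdd : ∀ x ∈ s, BddBelow (g '' {y | (x, y) ∈ C})) :
    ConvexOn ℝ s fun x => sInf (g '' {y | (x, y) ∈ C}) := by
  refine ⟨hs, fun x hx x' hx' a b ha hb hab => le_of_forall_pos_le_add fun ε hε => ?_⟩
  obtain ⟨_, ⟨y, hy, rfl⟩, hyε⟩ := Real.lt_sInf_add_pos ((hne x hx).image g) hε
  obtain ⟨_, ⟨y', hy', rfl⟩, hy'ε⟩ := Real.lt_sInf_add_pos ((hne x' hx').image g) hε
  have hmem : (a • x + b • x', a • y + b • y') ∈ C := hC hy hy' ha hb hab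
  calc sInf (g '' {y | (a • x + b • x', y) ∈ C})
      ≤ g (a • y + b • y') := csInf_le (hbdd _ (hs hx hx' ha hb hab)) ⟨_, hmem, rfl⟩
    _ ≤ a • g y + b • g y' := hg.2 trivial trivial ha hb hab
    _ ≤ a • (sInf (g '' {y | (x, y) ∈ C}) + ε) + b • (sInf (g '' {y | (x', y) ∈ C}) + ε) := by
      gcongr
    _ = a • sInf (g '' {y | (x, y) ∈ C}) + b • sInf (g '' {y | (x', y) ∈ C}) + ε := by
      simp only [smul_eq_mul]; linear_combination ε * hab

theorem ConvexOn.convex_setOf_le {f : E → ℝ} (hf : ConvexOn ℝ univ f) (l : F →ₗ[ℝ] ℝ) :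
    Convex ℝ {p : E × F | f p.1 ≤ l p.2} := by
  rintro ⟨x, y⟩ hxy ⟨x', y'⟩ hxy' a b ha hb hab
  calc f (a • x + b • x') ≤ a • f x + b • f x' := hf.2 trivial trivial ha hb hab
    _ ≤ a • l y + b • l y' := by gcongr <;> assumption
    _ = l (a • y + b • y') := by simp

theorem sq_add_le_mul_add {a b x₁ y₁ x₂ y₂ : ℝ} (ha : 0 ≤ a) (hb : 0 ≤ b) (hx₁ : 0 ≤ x₁)
    (hy₁ : 0 ≤ y₁) (hx₂ : 0 ≤ x₂) (hy₂ : 0 ≤ y₂) (h₁ : a ^ 2 ≤ x₁ * y₁) (h₂ : b ^ 2 ≤ x₂ * y₂) :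
    (a + b) ^ 2 ≤ (x₁ + x₂) * (y₁ + y₂) := by
  have hab : 2 * (a * b) ≤ x₁ * y₂ + x₂ * y₁ := by
    refine (pow_le_pow_iff_left₀ (by positivity) (by positivity) two_ne_zero).1 ?_
    calc (2 * (a * b)) ^ 2 = 4 * (a ^ 2 * b ^ 2) := by ring
      _ ≤ 4 * ((x₁ * y₂) * (x₂ * y₁)) := by
        have := mul_le_mul h₁ h₂ (sq_nonneg b) (by positivity)
        nlinarith
      _ ≤ (x₁ * y₂ + x₂ * y₁) ^ 2 := by nlinarith [sq_nonneg (x₁ * y₂ - x₂ * y₁)]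
  nlinarith

theorem ConvexOn.convex_setOf_sq_le_mul {φ : E → ℝ} (hφ : ConvexOn ℝ univ φ)
    (hφ₀ : ∀ x, 0 ≤ φ x) :
    Convex ℝ {p : E × ℝ × ℝ | 0 ≤ p.2.1 ∧ 0 ≤ p.2.2 ∧ φ p.1 ^ 2 ≤ p.2.1 * p.2.2} := by
  rintro ⟨x, D₁, D₂⟩ ⟨h₁, h₂, h⟩ ⟨x', D₁', D₂'⟩ ⟨h₁', h₂', h'⟩ a b ha hb hab
  simp only [mem_ofPred_eq, Prod.smul_mk, Prod.mk_add_mk, smul_eq_mul] at *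
  refine ⟨by positivity, by positivity, ?_⟩
  calc φ (a • x + b • x') ^ 2 ≤ (a * φ x + b * φ x') ^ 2 :=
        pow_le_pow_left₀ (hφ₀ _) (hφ.2 trivial trivial ha hb hab) 2
    _ ≤ (a * D₁ + b * D₁') * (a * D₂ + b * D₂') := by
      refine sq_add_le_mul_add (mul_nonneg ha (hφ₀ x)) (mul_nonneg hb (hφ₀ x')) (by positivity)
        (by positivity) (by positivity) (by positivity) ?_ ?_
      · nlinarith [mul_le_mul_of_nonneg_left h (sq_nonneg a)]
      · nlinarith [mul_le_mul_of_nonneg_left h' (sq_nonneg b)]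

end FiberInf

theorem ConvexOn.exp {E : Type*} [AddCommGroup E] [Module ℝ E] {s : Set E} {f : E → ℝ}
    (hf : ConvexOn ℝ s f) : ConvexOn ℝ s fun x => exp (f x) :=
  ⟨hf.1, fun _ hx _ hy _ _ ha hb hab =>
    (exp_le_exp.2 (hf.2 hx hy ha hb hab)).trans (convexOn_exp.2 trivial trivial ha hb hab)⟩

theorem convexOn_log_add_mul_exp {a b : ℝ} (ha : 0 < a) (hb : 0 ≤ b) :
    ConvexOn ℝ univ fun x => log (a + b * exp x) := by
  have hderiv (x : ℝ) :
      HasDerivAt (fun x => log (a + b * exp x)) (b * exp x / (a + b * exp x)) x := by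
    simpa using (((hasDerivAt_exp x).const_mul b).const_add a).log (by positivity)
  refine Monotone.convexOn_univ_of_deriv (fun x => (hderiv x).differentiableAt) fun x y hxy => ?_
  rw [(hderiv x).deriv, (hderiv y).deriv, div_le_div_iff₀ (by positivity) (by positivity)]
  nlinarith [mul_le_mul_of_nonneg_left (exp_le_exp.2 hxy) (mul_nonneg ha.le hb)]

theorem convexOn_sqrt_add_mul_exp_mul_exp {a b : ℝ} (ha : 0 < a) (hb : 0 ≤ b) :
    ConvexOn ℝ univ fun x => √((a + b * exp x) * exp x) := by
  have h := (((convexOn_log_add_mul_exp ha hb).add (convexOn_id convex_univ)).smul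
    (by norm_num : (0 : ℝ) ≤ 1 / 2)).exp
  refine h.congr fun x _ => ?_
  have hA : 0 < a + b * exp x := by positivity
  conv_rhs => rw [← exp_log hA, ← exp_add, ← exp_half]
  simp only [Pi.add_apply, id, smul_eq_mul]
  ring_nf

theorem convexOn_two_rpow_neg_two_mul : ConvexOn ℝ univ fun x : ℝ => (2 : ℝ) ^ (-2 * x) :=
  (convexOn_rpow_left two_pos).comp_linearMap (LinearMap.lsmul ℝ ℝ (-2))

theorem two_rpow_neg_two_mul_anti {r r' : ℝ} (h : r ≤ r') : (2 : ℝ) ^ (-2 * r') ≤ 2 ^ (-2 * r) :=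
  rpow_le_rpow_of_exponent_le one_le_two (by linarith)

section Distortion

variable {η r₁ r₂ r₁' r₂' : ℝ}

theorem d1min_eq_add : d1min η r₁ r₂ = (1 - η) * 2 ^ (-2 * r₁) + η * 2 ^ (-2 * (r₁ + r₂)) := by
  rw [d1min, mul_add (-2) r₁ r₂, rpow_add two_pos]
  ring

theorem d12min_eq_exp (η r₁ r₂ : ℝ) : d12min η r₁ r₂ =
    (1 - η + η * exp (-2 * log 2 * (r₁ + r₂))) * exp (-2 * log 2 * (r₁ + r₂)) := by
  rw [d12min, rpow_def_of_pos two_pos]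
  ring_nf

theorem d1min_pos (hη₀ : 0 ≤ η) (hη₁ : η < 1) : 0 < d1min η r₁ r₂ :=
  mul_pos (add_pos_of_pos_of_nonneg (sub_pos.2 hη₁) (by positivity)) (by positivity)

theorem d12min_pos (hη₀ : 0 ≤ η) (hη₁ : η < 1) : 0 < d12min η r₁ r₂ :=
  mul_pos (add_pos_of_pos_of_nonneg (sub_pos.2 hη₁) (by positivity)) (by positivity)

theorem d1min_anti (hη₀ : 0 ≤ η) (hη₁ : η ≤ 1) (h₁ : r₁ ≤ r₁') (h₂ : r₂ ≤ r₂') :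
    d1min η r₁' r₂' ≤ d1min η r₁ r₂ := by
  unfold d1min
  gcongr (1 - η + η * ?_) * ?_ <;> exact two_rpow_neg_two_mul_anti (by linarith)

theorem d12min_anti (hη₀ : 0 ≤ η) (hη₁ : η ≤ 1) (h₁ : r₁ ≤ r₁') (h₂ : r₂ ≤ r₂') :
    d12min η r₁' r₂' ≤ d12min η r₁ r₂ := by
  unfold d12min
  gcongr (1 - η + η * ?_) * ?_ <;> exact two_rpow_neg_two_mul_anti (by linarith)

theorem convexOn_d1min (hη₀ : 0 ≤ η) (hη₁ : η ≤ 1) :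
    ConvexOn ℝ univ fun r : ℝ × ℝ => d1min η r.1 r.2 := by
  simp_rw [d1min_eq_add]
  exact ((convexOn_two_rpow_neg_two_mul.comp_linearMap (LinearMap.fst ℝ ℝ ℝ)).smul
    (sub_nonneg.2 hη₁)).add ((convexOn_two_rpow_neg_two_mul.comp_linearMap
      (LinearMap.fst ℝ ℝ ℝ + LinearMap.snd ℝ ℝ ℝ)).smul hη₀)

-- `d2min η r₁ r₂` unfolds to `d1min η r₂ r₁`, so facts about `d2min` are read off from `d1min`.
theorem convexOn_d2min (hη₀ : 0 ≤ η) (hη₁ : η ≤ 1) :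
    ConvexOn ℝ univ fun r : ℝ × ℝ => d2min η r.1 r.2 :=
  (convexOn_d1min hη₀ hη₁).comp_linearMap (LinearEquiv.prodComm ℝ ℝ ℝ).toLinearMap

theorem convexOn_sqrt_d12min (hη₀ : 0 ≤ η) (hη₁ : η < 1) :
    ConvexOn ℝ univ fun r : ℝ × ℝ => √(d12min η r.1 r.2) := by
  simp_rw [d12min_eq_exp]
  exact (convexOn_sqrt_add_mul_exp_mul_exp (sub_pos.2 hη₁) hη₀).comp_linearMap
    ((-2 * log 2) • (LinearMap.fst ℝ ℝ ℝ + LinearMap.snd ℝ ℝ ℝ))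

end Distortion

def distGraph (η : ℝ) : Set ((ℝ × ℝ) × ℝ × ℝ) := {p | p.2 ∈ distSet η p.1.1 p.1.2}

section Feasible

variable {η w₁ w₂ r₁ r₂ r₁' r₂' : ℝ} (hη₀ : 0 ≤ η) (hη₁ : η < 1)
include hη₀ hη₁

theorem pos_of_mem_distSet {D : ℝ × ℝ} (hD : D ∈ distSet η r₁ r₂) : 0 < D.1 ∧ 0 < D.2 :=
  ⟨(d1min_pos hη₀ hη₁).trans_le hD.1, (d1min_pos hη₀ hη₁).trans_le hD.2.1⟩

theorem distSet_nonempty : (distSet η r₁ r₂).Nonempty := by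
  have hd₁ : 0 < d1min η r₁ r₂ := d1min_pos hη₀ hη₁
  refine ⟨(d1min η r₁ r₂, max (d2min η r₁ r₂) (d12min η r₁ r₂ / d1min η r₁ r₂)),
    le_rfl, le_max_left _ _, ?_⟩
  calc d12min η r₁ r₂ = d1min η r₁ r₂ * (d12min η r₁ r₂ / d1min η r₁ r₂) :=
        (mul_div_cancel₀ _ hd₁.ne').symm
    _ ≤ _ := by gcongr; exact le_max_right _ _

theorem distSet_mono (h₁ : r₁ ≤ r₁') (h₂ : r₂ ≤ r₂') : distSet η r₁ r₂ ⊆ distSet η r₁' r₂' :=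
  fun _ ⟨hD₁, hD₂, hD₁₂⟩ =>
    ⟨(d1min_anti hη₀ hη₁.le h₁ h₂).trans hD₁, (d1min_anti hη₀ hη₁.le h₂ h₁).trans hD₂,
      (d12min_anti hη₀ hη₁.le h₁ h₂).trans hD₁₂⟩

theorem bddBelow_weightedSum_image (hw₁ : 0 ≤ w₁) (hw₂ : 0 ≤ w₂) :
    BddBelow ((fun D : ℝ × ℝ => w₁ * D.1 + w₂ * D.2) '' distSet η r₁ r₂) := by
  refine ⟨0, ?_⟩
  rintro _ ⟨D, hD, rfl⟩
  obtain ⟨hD₁, hD₂⟩ := pos_of_mem_distSet hη₀ hη₁ hD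
  positivity

theorem Dmin_anti (hw₁ : 0 ≤ w₁) (hw₂ : 0 ≤ w₂) (h₁ : r₁ ≤ r₁') (h₂ : r₂ ≤ r₂') :
    Dmin η w₁ w₂ r₁' r₂' ≤ Dmin η w₁ w₂ r₁ r₂ :=
  csInf_le_csInf (bddBelow_weightedSum_image hη₀ hη₁ hw₁ hw₂)
    ((distSet_nonempty hη₀ hη₁).image _) (image_mono (distSet_mono hη₀ hη₁ h₁ h₂))

theorem convex_distGraph : Convex ℝ (distGraph η) := by
  have hgraph : distGraph η =
      {p | d1min η p.1.1 p.1.2 ≤ LinearMap.fst ℝ ℝ ℝ p.2} ∩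
        {p | d2min η p.1.1 p.1.2 ≤ LinearMap.snd ℝ ℝ ℝ p.2} ∩
        {p | 0 ≤ p.2.1 ∧ 0 ≤ p.2.2 ∧ √(d12min η p.1.1 p.1.2) ^ 2 ≤ p.2.1 * p.2.2} := by
    ext ⟨r, D⟩
    simp only [distGraph, distSet, mem_inter_iff, mem_ofPred_eq, LinearMap.fst_apply,
      LinearMap.snd_apply, sq_sqrt (d12min_pos hη₀ hη₁).le]
    constructor
    · rintro ⟨h₁, h₂, h₁₂⟩
      have hD := pos_of_mem_distSet hη₀ hη₁ ⟨h₁, h₂, h₁₂⟩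
      exact ⟨⟨h₁, h₂⟩, hD.1.le, hD.2.le, h₁₂⟩
    · rintro ⟨⟨h₁, h₂⟩, -, -, h₁₂⟩
      exact ⟨h₁, h₂, h₁₂⟩
  rw [hgraph]
  exact (((convexOn_d1min hη₀ hη₁.le).convex_setOf_le _).inter
    ((convexOn_d2min hη₀ hη₁.le).convex_setOf_le _)).inter
    ((convexOn_sqrt_d12min hη₀ hη₁).convex_setOf_sq_le_mul fun _ => sqrt_nonneg _)

end Feasible

theorem Dmin_convex_antitone_general (η w1 w2 : ℝ) (hη0 : 0 < η) (hη1 : η < 1)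
    (hw0 : 0 < w1) (hw12 : w1 < w2) :
    ConvexOn ℝ (Set.Ici (0 : ℝ) ×ˢ Set.Ici (0 : ℝ))
      (fun p : ℝ × ℝ => Dmin η w1 w2 p.1 p.2) ∧
    (∀ r1 r1' r2 : ℝ, 0 ≤ r1 → r1 ≤ r1' → 0 ≤ r2 →
      Dmin η w1 w2 r1' r2 ≤ Dmin η w1 w2 r1 r2) ∧
    (∀ r1 r2 r2' : ℝ, 0 ≤ r1 → 0 ≤ r2 → r2 ≤ r2' →
      Dmin η w1 w2 r1 r2' ≤ Dmin η w1 w2 r1 r2) := by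
  have hw2 : 0 ≤ w2 := hw0.le.trans hw12.le
  have hlin : ConvexOn ℝ univ fun D : ℝ × ℝ => w1 * D.1 + w2 * D.2 :=
    (w1 • LinearMap.fst ℝ ℝ ℝ + w2 • LinearMap.snd ℝ ℝ ℝ).convexOn convex_univ
  refine ⟨?_, fun r1 r1' r2 _ h _ => Dmin_anti hη0.le hη1 hw0.le hw2 h le_rfl,
    fun r1 r2 r2' _ _ h => Dmin_anti hη0.le hη1 hw0.le hw2 le_rfl h⟩
  exact (convex_distGraph hη0.le hη1).convexOn_sInf_image_fiber hlin
    ((convex_Ici 0).prod (convex_Ici 0))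
    (fun r _ => distSet_nonempty (r₁ := r.1) (r₂ := r.2) hη0.le hη1)
    fun r _ => bddBelow_weightedSum_image (r₁ := r.1) (r₂ := r.2) hη0.le hη1 hw0.le hw2

/-- Proposition 1 of the paper: the minimum weighted-sum distortion
`D(r1,r2)` is convex on `[0,∞)²` and nonincreasing in each coordinate. -/
theorem Dmin_convex_antitone (η w1 w2 : ℝ) (hη0 : 0 < η) (hη1 : η < 1)
    (hw0 : 0 < w1) (hw12 : w1 < w2) (hwsum : w1 + w2 = 1) :
    ConvexOn ℝ (Set.Ici (0 : ℝ) ×ˢ Set.Ici (0 : ℝ))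
      (fun p : ℝ × ℝ => Dmin η w1 w2 p.1 p.2) ∧
    (∀ r1 r1' r2 : ℝ, 0 ≤ r1 → r1 ≤ r1' → 0 ≤ r2 →
      Dmin η w1 w2 r1' r2 ≤ Dmin η w1 w2 r1 r2) ∧
    (∀ r1 r2 r2' : ℝ, 0 ≤ r1 → 0 ≤ r2 → r2 ≤ r2' →
      Dmin η w1 w2 r1 r2' ≤ Dmin η w1 w2 r1 r2) :=
  Dmin_convex_antitone_general η w1 w2 hη0 hη1 hw0 hw12
end

section
/- Fix η with 0 < η < 1, weights w1, w2 with 0 < w1 < w2 and w1 + w2 = 1, and channel gains h1, h2 > 0. Define D(r1,r2) as the infimum of w1·D1 + w2·D2 over (D1,D2) ∈ S(r1,r2). Then the function (p1, p2) ↦ D( (1/2)·log2(1 + h1·p1), (1/2)·log2(1 + h2·p2) ) is convex on [0,∞)². -/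
/- ------------------------------------------------------------------ -/
/- Auxiliary lemmas                                                    -/
/- ------------------------------------------------------------------ -/

private lemma two_rpow_neg_logb {z : ℝ} (hz : 0 < z) :
    (2 : ℝ) ^ (-2 * ((1 / 2) * Real.logb 2 z)) = z⁻¹ := by
  have h : -2 * ((1 / 2) * Real.logb 2 z) = -Real.logb 2 z := by ring
  rw [h, Real.rpow_neg (by norm_num), Real.rpow_logb (by norm_num) (by norm_num) hz]

private lemma distSet_eq (η X Y : ℝ) (hX : 0 < X) (hY : 0 < Y) :
    distSet η ((1 / 2) * Real.logb 2 X) ((1 / 2) * Real.logb 2 Y) =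
      {D : ℝ × ℝ |
        ((1 - η) + η * Y⁻¹) * X⁻¹ ≤ D.1 ∧
        ((1 - η) + η * X⁻¹) * Y⁻¹ ≤ D.2 ∧
        ((1 - η) + η * (X⁻¹ * Y⁻¹)) * (X⁻¹ * Y⁻¹) ≤ D.1 * D.2} := by
  have h12 : (2 : ℝ) ^ (-2 * ((1 / 2) * Real.logb 2 X + (1 / 2) * Real.logb 2 Y))
      = X⁻¹ * Y⁻¹ := by
    have h : -2 * ((1 / 2) * Real.logb 2 X + (1 / 2) * Real.logb 2 Y)
        = (-2 * ((1 / 2) * Real.logb 2 X)) + (-2 * ((1 / 2) * Real.logb 2 Y)) := by ring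
    rw [h, Real.rpow_add (by norm_num), two_rpow_neg_logb hX, two_rpow_neg_logb hY]
  unfold distSet d1min d2min d12min
  rw [two_rpow_neg_logb hX, two_rpow_neg_logb hY, h12]

private lemma combo_pos {a b X Y : ℝ} (ha : 0 ≤ a) (hb : 0 ≤ b) (hab : a + b = 1)
    (hX : 0 < X) (hY : 0 < Y) : 0 < a * X + b * Y := by
  rcases ha.eq_or_lt with h | h
  · have hb1 : b = 1 := by linarith
    rw [← h, hb1]; simpa using hY
  · have h1 : 0 < a * X := mul_pos h hX
    have h2 : 0 ≤ b * Y := mul_nonneg hb hY.le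
    linarith

private lemma log_combo {a b X Y : ℝ} (ha : 0 ≤ a) (hb : 0 ≤ b) (hab : a + b = 1)
    (hX : 0 < X) (hY : 0 < Y) :
    a * Real.log X + b * Real.log Y ≤ Real.log (a * X + b * Y) := by
  obtain rfl : b = 1 - a := by linarith
  have hm : 0 < a * X + (1 - a) * Y := combo_pos ha hb hab hX hY
  have l1 : Real.log X - Real.log (a * X + (1 - a) * Y) ≤ X / (a * X + (1 - a) * Y) - 1 := by
    have := Real.log_le_sub_one_of_pos (div_pos hX hm)
    rwa [Real.log_div hX.ne' hm.ne'] at this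
  have l2 : Real.log Y - Real.log (a * X + (1 - a) * Y) ≤ Y / (a * X + (1 - a) * Y) - 1 := by
    have := Real.log_le_sub_one_of_pos (div_pos hY hm)
    rwa [Real.log_div hY.ne' hm.ne'] at this
  have key : a * (X / (a * X + (1 - a) * Y)) + (1 - a) * (Y / (a * X + (1 - a) * Y)) = 1 := by
    field_simp
  nlinarith [mul_le_mul_of_nonneg_left l1 ha, mul_le_mul_of_nonneg_left l2 hb]

private lemma exp_combo {a b x y z : ℝ} (ha : 0 ≤ a) (hb : 0 ≤ b) (hab : a + b = 1)
    (h : z ≤ a * x + b * y) : Real.exp z ≤ a * Real.exp x + b * Real.exp y := by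
  have h2 := convexOn_exp.2 (Set.mem_univ x) (Set.mem_univ y) ha hb hab
  simp only [smul_eq_mul] at h2
  exact (Real.exp_le_exp.2 h).trans h2

private lemma inv_combo {a b X Y : ℝ} (ha : 0 ≤ a) (hb : 0 ≤ b) (hab : a + b = 1)
    (hX : 0 < X) (hY : 0 < Y) : (a * X + b * Y)⁻¹ ≤ a * X⁻¹ + b * Y⁻¹ := by
  have hm : 0 < a * X + b * Y := combo_pos ha hb hab hX hY
  have h := exp_combo (z := -Real.log (a * X + b * Y)) (x := -Real.log X) (y := -Real.log Y)
    ha hb hab (by linarith [log_combo ha hb hab hX hY])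
  rwa [Real.exp_neg, Real.exp_log hm, Real.exp_neg, Real.exp_log hX,
    Real.exp_neg, Real.exp_log hY] at h

private lemma prod_inv_combo {a b X X' Y Y' : ℝ} (ha : 0 ≤ a) (hb : 0 ≤ b) (hab : a + b = 1)
    (hX : 0 < X) (hX' : 0 < X') (hY : 0 < Y) (hY' : 0 < Y') :
    (a * X + b * X')⁻¹ * (a * Y + b * Y')⁻¹ ≤ a * (X⁻¹ * Y⁻¹) + b * (X'⁻¹ * Y'⁻¹) := by
  have hXm : 0 < a * X + b * X' := combo_pos ha hb hab hX hX'
  have hYm : 0 < a * Y + b * Y' := combo_pos ha hb hab hY hY'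
  have h := exp_combo (z := -(Real.log (a * X + b * X') + Real.log (a * Y + b * Y')))
    (x := -(Real.log X + Real.log Y)) (y := -(Real.log X' + Real.log Y')) ha hb hab
    (by linarith [log_combo ha hb hab hX hX', log_combo ha hb hab hY hY'])
  simp only [Real.exp_neg, Real.exp_add, Real.exp_log hXm, Real.exp_log hYm,
    Real.exp_log hX, Real.exp_log hX', Real.exp_log hY, Real.exp_log hY', mul_inv] at h
  exact h

private lemma sqrt_exp_half (t : ℝ) : Real.sqrt (Real.exp t) = Real.exp (t / 2) := by
  rw [show Real.exp t = Real.exp (t / 2) ^ 2 from by rw [sq, ← Real.exp_add, add_halves],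
    Real.sqrt_sq (Real.exp_pos _).le]

private lemma sqrt_prod_inv_combo {a b X X' Y Y' : ℝ} (ha : 0 ≤ a) (hb : 0 ≤ b)
    (hab : a + b = 1) (hX : 0 < X) (hX' : 0 < X') (hY : 0 < Y) (hY' : 0 < Y') :
    Real.sqrt ((a * X + b * X')⁻¹ * (a * Y + b * Y')⁻¹) ≤
      a * Real.sqrt (X⁻¹ * Y⁻¹) + b * Real.sqrt (X'⁻¹ * Y'⁻¹) := by
  have hXm : 0 < a * X + b * X' := combo_pos ha hb hab hX hX'
  have hYm : 0 < a * Y + b * Y' := combo_pos ha hb hab hY hY'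
  have key : ∀ Z W : ℝ, 0 < Z → 0 < W →
      Real.sqrt (Z⁻¹ * W⁻¹) = Real.exp (-(Real.log Z + Real.log W) / 2) := by
    intro Z W hZ hW
    rw [show Z⁻¹ * W⁻¹ = Real.exp (-(Real.log Z + Real.log W)) from by
      rw [Real.exp_neg, Real.exp_add, Real.exp_log hZ, Real.exp_log hW, mul_inv],
      sqrt_exp_half]
  rw [key _ _ hXm hYm, key _ _ hX hY, key _ _ hX' hY']
  exact exp_combo ha hb hab
    (by linarith [log_combo ha hb hab hX hX', log_combo ha hb hab hY hY'])

private lemma minkowski (x1 y1 x2 y2 : ℝ) :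
    Real.sqrt ((x1 + x2) ^ 2 + (y1 + y2) ^ 2) ≤
      Real.sqrt (x1 ^ 2 + y1 ^ 2) + Real.sqrt (x2 ^ 2 + y2 ^ 2) := by
  have hA := Real.sqrt_nonneg (x1 ^ 2 + y1 ^ 2)
  have hB := Real.sqrt_nonneg (x2 ^ 2 + y2 ^ 2)
  have hA2 : Real.sqrt (x1 ^ 2 + y1 ^ 2) ^ 2 = x1 ^ 2 + y1 ^ 2 := Real.sq_sqrt (by positivity)
  have hB2 : Real.sqrt (x2 ^ 2 + y2 ^ 2) ^ 2 = x2 ^ 2 + y2 ^ 2 := Real.sq_sqrt (by positivity)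
  have cs : x1 * x2 + y1 * y2 ≤
      Real.sqrt (x1 ^ 2 + y1 ^ 2) * Real.sqrt (x2 ^ 2 + y2 ^ 2) := by
    rcases le_or_gt (x1 * x2 + y1 * y2) 0 with h | h
    · exact h.trans (mul_nonneg hA hB)
    · nlinarith [sq_nonneg (x1 * y2 - x2 * y1), mul_nonneg hA hB, hA2, hB2, h]
  have hsum : (x1 + x2) ^ 2 + (y1 + y2) ^ 2 ≤
      (Real.sqrt (x1 ^ 2 + y1 ^ 2) + Real.sqrt (x2 ^ 2 + y2 ^ 2)) ^ 2 := by nlinarith [cs]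
  calc Real.sqrt ((x1 + x2) ^ 2 + (y1 + y2) ^ 2)
      ≤ Real.sqrt ((Real.sqrt (x1 ^ 2 + y1 ^ 2) + Real.sqrt (x2 ^ 2 + y2 ^ 2)) ^ 2) :=
        Real.sqrt_le_sqrt hsum
    _ = _ := Real.sqrt_sq (by positivity)

private lemma sqrt_c_combo {η a b Tp Tq Tm : ℝ} (hη0 : 0 ≤ η) (hη1 : η ≤ 1)
    (ha : 0 ≤ a) (hb : 0 ≤ b)
    (hTp : 0 ≤ Tp) (hTq : 0 ≤ Tq) (hTm : 0 ≤ Tm)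
    (h1 : Real.sqrt Tm ≤ a * Real.sqrt Tp + b * Real.sqrt Tq)
    (h2 : Tm ≤ a * Tp + b * Tq) :
    Real.sqrt ((1 - η) * Tm + η * Tm ^ 2) ≤
      a * Real.sqrt ((1 - η) * Tp + η * Tp ^ 2) + b * Real.sqrt ((1 - η) * Tq + η * Tq ^ 2) := by
  have e1 : (0 : ℝ) ≤ 1 - η := by linarith
  set c1 := Real.sqrt (1 - η) with hc1def
  set c2 := Real.sqrt η with hc2def
  have hc1 : c1 ^ 2 = 1 - η := Real.sq_sqrt e1
  have hc2 : c2 ^ 2 = η := Real.sq_sqrt hη0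
  have hc1n : 0 ≤ c1 := Real.sqrt_nonneg _
  have hc2n : 0 ≤ c2 := Real.sqrt_nonneg _
  have idT : ∀ T : ℝ, 0 ≤ T →
      (1 - η) * T + η * T ^ 2 = (c1 * Real.sqrt T) ^ 2 + (c2 * T) ^ 2 := by
    intro T hT
    have hs : Real.sqrt T ^ 2 = T := Real.sq_sqrt hT
    rw [mul_pow, mul_pow, hc1, hc2, hs]
  rw [idT Tm hTm, idT Tp hTp, idT Tq hTq]
  have hs1 : c1 * Real.sqrt Tm ≤ a * (c1 * Real.sqrt Tp) + b * (c1 * Real.sqrt Tq) := by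
    nlinarith [mul_le_mul_of_nonneg_left h1 hc1n]
  have hs2 : c2 * Tm ≤ a * (c2 * Tp) + b * (c2 * Tq) := by
    nlinarith [mul_le_mul_of_nonneg_left h2 hc2n]
  have n1 : 0 ≤ c1 * Real.sqrt Tm := mul_nonneg hc1n (Real.sqrt_nonneg _)
  have n2 : 0 ≤ c2 * Tm := mul_nonneg hc2n hTm
  have hmono : Real.sqrt ((c1 * Real.sqrt Tm) ^ 2 + (c2 * Tm) ^ 2) ≤
      Real.sqrt ((a * (c1 * Real.sqrt Tp) + b * (c1 * Real.sqrt Tq)) ^ 2 +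
        (a * (c2 * Tp) + b * (c2 * Tq)) ^ 2) := by
    apply Real.sqrt_le_sqrt
    exact add_le_add (pow_le_pow_left₀ n1 hs1 2) (pow_le_pow_left₀ n2 hs2 2)
  refine hmono.trans ?_
  have mk := minkowski (a * (c1 * Real.sqrt Tp)) (a * (c2 * Tp))
    (b * (c1 * Real.sqrt Tq)) (b * (c2 * Tq))
  have pull : ∀ t U V : ℝ, 0 ≤ t →
      Real.sqrt ((t * U) ^ 2 + (t * V) ^ 2) = t * Real.sqrt (U ^ 2 + V ^ 2) := by
    intro t U V ht
    rw [show (t * U) ^ 2 + (t * V) ^ 2 = t ^ 2 * (U ^ 2 + V ^ 2) from by ring,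
      Real.sqrt_mul (sq_nonneg t), Real.sqrt_sq ht]
  rw [pull a _ _ ha, pull b _ _ hb] at mk
  exact mk

private lemma cauchy_prod {a b D1 D2 E1 E2 : ℝ} (ha : 0 ≤ a) (hb : 0 ≤ b)
    (hD1 : 0 ≤ D1) (hD2 : 0 ≤ D2) (hE1 : 0 ≤ E1) (hE2 : 0 ≤ E2) :
    (a * Real.sqrt (D1 * D2) + b * Real.sqrt (E1 * E2)) ^ 2 ≤
      (a * D1 + b * E1) * (a * D2 + b * E2) := by
  have h1 : Real.sqrt (D1 * D2) ^ 2 = D1 * D2 := Real.sq_sqrt (by positivity)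
  have h2 : Real.sqrt (E1 * E2) ^ 2 = E1 * E2 := Real.sq_sqrt (by positivity)
  have h3 : Real.sqrt (D1 * D2) * Real.sqrt (E1 * E2)
      = Real.sqrt (D1 * E2) * Real.sqrt (E1 * D2) := by
    rw [← Real.sqrt_mul (by positivity), ← Real.sqrt_mul (by positivity),
      show D1 * D2 * (E1 * E2) = D1 * E2 * (E1 * D2) from by ring]
  have h4 : Real.sqrt (D1 * E2) ^ 2 = D1 * E2 := Real.sq_sqrt (by positivity)
  have h5 : Real.sqrt (E1 * D2) ^ 2 = E1 * D2 := Real.sq_sqrt (by positivity)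
  have amg : 2 * (Real.sqrt (D1 * E2) * Real.sqrt (E1 * D2)) ≤ D1 * E2 + E1 * D2 := by
    nlinarith [sq_nonneg (Real.sqrt (D1 * E2) - Real.sqrt (E1 * D2)), h4, h5]
  have key2 : 2 * (Real.sqrt (D1 * D2) * Real.sqrt (E1 * E2)) ≤ D1 * E2 + E1 * D2 := by
    rw [h3]; linarith
  have h6 := mul_le_mul_of_nonneg_left key2 (mul_nonneg ha hb)
  have e1 : a ^ 2 * Real.sqrt (D1 * D2) ^ 2 = a ^ 2 * (D1 * D2) := by rw [h1]
  have e2 : b ^ 2 * Real.sqrt (E1 * E2) ^ 2 = b ^ 2 * (E1 * E2) := by rw [h2]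
  nlinarith [h6, e1, e2]

/-- The key step: convex combinations of feasible pairs stay feasible. -/
private lemma core_combo {η a b X X' Y Y' D1 D2 E1 E2 : ℝ}
    (hη0 : 0 < η) (hη1 : η < 1)
    (ha : 0 ≤ a) (hb : 0 ≤ b) (hab : a + b = 1)
    (hX : 0 < X) (hX' : 0 < X') (hY : 0 < Y) (hY' : 0 < Y')
    (hD1 : ((1 - η) + η * Y⁻¹) * X⁻¹ ≤ D1)
    (hD2 : ((1 - η) + η * X⁻¹) * Y⁻¹ ≤ D2)
    (hD12 : ((1 - η) + η * (X⁻¹ * Y⁻¹)) * (X⁻¹ * Y⁻¹) ≤ D1 * D2)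
    (hE1 : ((1 - η) + η * Y'⁻¹) * X'⁻¹ ≤ E1)
    (hE2 : ((1 - η) + η * X'⁻¹) * Y'⁻¹ ≤ E2)
    (hE12 : ((1 - η) + η * (X'⁻¹ * Y'⁻¹)) * (X'⁻¹ * Y'⁻¹) ≤ E1 * E2) :
    ((1 - η) + η * (a * Y + b * Y')⁻¹) * (a * X + b * X')⁻¹ ≤ a * D1 + b * E1 ∧
    ((1 - η) + η * (a * X + b * X')⁻¹) * (a * Y + b * Y')⁻¹ ≤ a * D2 + b * E2 ∧
    ((1 - η) + η * ((a * X + b * X')⁻¹ * (a * Y + b * Y')⁻¹)) *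
        ((a * X + b * X')⁻¹ * (a * Y + b * Y')⁻¹) ≤
      (a * D1 + b * E1) * (a * D2 + b * E2) := by
  have hXm : 0 < a * X + b * X' := combo_pos ha hb hab hX hX'
  have hYm : 0 < a * Y + b * Y' := combo_pos ha hb hab hY hY'
  have hu : (a * X + b * X')⁻¹ ≤ a * X⁻¹ + b * X'⁻¹ := inv_combo ha hb hab hX hX'
  have hv : (a * Y + b * Y')⁻¹ ≤ a * Y⁻¹ + b * Y'⁻¹ := inv_combo ha hb hab hY hY'
  have hT : (a * X + b * X')⁻¹ * (a * Y + b * Y')⁻¹ ≤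
      a * (X⁻¹ * Y⁻¹) + b * (X'⁻¹ * Y'⁻¹) := prod_inv_combo ha hb hab hX hX' hY hY'
  have hη1' : (0 : ℝ) ≤ 1 - η := by linarith
  refine ⟨?_, ?_, ?_⟩
  · nlinarith [mul_le_mul_of_nonneg_left hu hη1', mul_le_mul_of_nonneg_left hT hη0.le,
      mul_le_mul_of_nonneg_left hD1 ha, mul_le_mul_of_nonneg_left hE1 hb]
  · nlinarith [mul_le_mul_of_nonneg_left hv hη1', mul_le_mul_of_nonneg_left hT hη0.le,
      mul_le_mul_of_nonneg_left hD2 ha, mul_le_mul_of_nonneg_left hE2 hb]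
  · -- the product constraint
    have hTp0 : 0 < X⁻¹ * Y⁻¹ := mul_pos (inv_pos.2 hX) (inv_pos.2 hY)
    have hTq0 : 0 < X'⁻¹ * Y'⁻¹ := mul_pos (inv_pos.2 hX') (inv_pos.2 hY')
    have hTm0 : 0 < (a * X + b * X')⁻¹ * (a * Y + b * Y')⁻¹ :=
      mul_pos (inv_pos.2 hXm) (inv_pos.2 hYm)
    have hS : Real.sqrt ((a * X + b * X')⁻¹ * (a * Y + b * Y')⁻¹) ≤
        a * Real.sqrt (X⁻¹ * Y⁻¹) + b * Real.sqrt (X'⁻¹ * Y'⁻¹) :=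
      sqrt_prod_inv_combo ha hb hab hX hX' hY hY'
    have hψ := sqrt_c_combo (Tp := X⁻¹ * Y⁻¹) (Tq := X'⁻¹ * Y'⁻¹)
      (Tm := (a * X + b * X')⁻¹ * (a * Y + b * Y')⁻¹)
      hη0.le hη1.le ha hb hTp0.le hTq0.le hTm0.le hS hT
    -- lower bounds give nonnegativity of D's and E's
    have d1n : (0 : ℝ) ≤ ((1 - η) + η * Y⁻¹) * X⁻¹ :=
      mul_nonneg (add_nonneg hη1' (mul_nonneg hη0.le (inv_nonneg.2 hY.le)))
        (inv_nonneg.2 hX.le)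
    have d2n : (0 : ℝ) ≤ ((1 - η) + η * X⁻¹) * Y⁻¹ :=
      mul_nonneg (add_nonneg hη1' (mul_nonneg hη0.le (inv_nonneg.2 hX.le)))
        (inv_nonneg.2 hY.le)
    have e1n : (0 : ℝ) ≤ ((1 - η) + η * Y'⁻¹) * X'⁻¹ :=
      mul_nonneg (add_nonneg hη1' (mul_nonneg hη0.le (inv_nonneg.2 hY'.le)))
        (inv_nonneg.2 hX'.le)
    have e2n : (0 : ℝ) ≤ ((1 - η) + η * X'⁻¹) * Y'⁻¹ :=
      mul_nonneg (add_nonneg hη1' (mul_nonneg hη0.le (inv_nonneg.2 hX'.le)))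
        (inv_nonneg.2 hY'.le)
    have hD1n : 0 ≤ D1 := d1n.trans hD1
    have hD2n : 0 ≤ D2 := d2n.trans hD2
    have hE1n : 0 ≤ E1 := e1n.trans hE1
    have hE2n : 0 ≤ E2 := e2n.trans hE2
    have hcpP : (1 - η) * (X⁻¹ * Y⁻¹) + η * (X⁻¹ * Y⁻¹) ^ 2 ≤ D1 * D2 := by linarith [hD12]
    have hcqQ : (1 - η) * (X'⁻¹ * Y'⁻¹) + η * (X'⁻¹ * Y'⁻¹) ^ 2 ≤ E1 * E2 := by
      linarith [hE12]
    have hsqP : Real.sqrt ((1 - η) * (X⁻¹ * Y⁻¹) + η * (X⁻¹ * Y⁻¹) ^ 2) ≤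
        Real.sqrt (D1 * D2) := Real.sqrt_le_sqrt hcpP
    have hsqQ : Real.sqrt ((1 - η) * (X'⁻¹ * Y'⁻¹) + η * (X'⁻¹ * Y'⁻¹) ^ 2) ≤
        Real.sqrt (E1 * E2) := Real.sqrt_le_sqrt hcqQ
    set Tm := (a * X + b * X')⁻¹ * (a * Y + b * Y')⁻¹ with hTmdef
    have chain : Real.sqrt ((1 - η) * Tm + η * Tm ^ 2) ≤
        a * Real.sqrt (D1 * D2) + b * Real.sqrt (E1 * E2) :=
      hψ.trans (add_le_add (mul_le_mul_of_nonneg_left hsqP ha)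
        (mul_le_mul_of_nonneg_left hsqQ hb))
    have hcm0 : (0 : ℝ) ≤ (1 - η) * Tm + η * Tm ^ 2 := by positivity
    have heq : ((1 - η) + η * Tm) * Tm = Real.sqrt ((1 - η) * Tm + η * Tm ^ 2) ^ 2 := by
      rw [Real.sq_sqrt hcm0]; ring
    rw [heq]
    calc Real.sqrt ((1 - η) * Tm + η * Tm ^ 2) ^ 2
        ≤ (a * Real.sqrt (D1 * D2) + b * Real.sqrt (E1 * E2)) ^ 2 :=
          pow_le_pow_left₀ (Real.sqrt_nonneg _) chain 2
      _ ≤ (a * D1 + b * E1) * (a * D2 + b * E2) :=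
          cauchy_prod ha hb hD1n hD2n hE1n hE2n

/-- The weighted-sum distortion values over the explicit constraint set. -/
private def box (η w1 w2 X Y : ℝ) : Set ℝ :=
  (fun D : ℝ × ℝ => w1 * D.1 + w2 * D.2) ''
    {D : ℝ × ℝ |
      ((1 - η) + η * Y⁻¹) * X⁻¹ ≤ D.1 ∧
      ((1 - η) + η * X⁻¹) * Y⁻¹ ≤ D.2 ∧
      ((1 - η) + η * (X⁻¹ * Y⁻¹)) * (X⁻¹ * Y⁻¹) ≤ D.1 * D.2}

private lemma Dmin_eq_box (η w1 w2 X Y : ℝ) (hX : 0 < X) (hY : 0 < Y) :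
    Dmin η w1 w2 ((1 / 2) * Real.logb 2 X) ((1 / 2) * Real.logb 2 Y)
      = sInf (box η w1 w2 X Y) := by
  unfold Dmin box
  rw [distSet_eq η X Y hX hY]

private lemma box_nonempty {η w1 w2 X Y : ℝ} (hη0 : 0 < η) (hη1 : η < 1)
    (hX : 1 ≤ X) (hY : 1 ≤ Y) : (box η w1 w2 X Y).Nonempty := by
  have hX0 : (0 : ℝ) < X := by linarith
  have hY0 : (0 : ℝ) < Y := by linarith
  have hXi : X⁻¹ ≤ 1 := by rw [inv_eq_one_div, div_le_one hX0]; exact hX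
  have hYi : Y⁻¹ ≤ 1 := by rw [inv_eq_one_div, div_le_one hY0]; exact hY
  have hXip : 0 < X⁻¹ := inv_pos.2 hX0
  have hYip : 0 < Y⁻¹ := inv_pos.2 hY0
  have hT1 : X⁻¹ * Y⁻¹ ≤ 1 := by
    nlinarith [mul_nonneg (by linarith : (0:ℝ) ≤ 1 - X⁻¹) (by linarith : (0:ℝ) ≤ 1 - Y⁻¹)]
  have hT0 : 0 < X⁻¹ * Y⁻¹ := mul_pos hXip hYip
  refine ⟨w1 * 1 + w2 * 1, ⟨(1, 1), ⟨?_, ?_, ?_⟩, rfl⟩⟩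
  · nlinarith [mul_nonneg (by linarith : (0:ℝ) ≤ 1 - η) (by linarith : (0:ℝ) ≤ 1 - X⁻¹)]
  · nlinarith [mul_nonneg (by linarith : (0:ℝ) ≤ 1 - η) (by linarith : (0:ℝ) ≤ 1 - Y⁻¹)]
  · have h1 : (0:ℝ) ≤ (1 - η) * (1 - X⁻¹ * Y⁻¹) :=
      mul_nonneg (by linarith) (by linarith)
    have h2 : (0:ℝ) ≤ η * ((1 - X⁻¹ * Y⁻¹) * (1 + X⁻¹ * Y⁻¹)) :=
      mul_nonneg hη0.le (mul_nonneg (by linarith) (by linarith))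
    nlinarith [h1, h2]

private lemma box_bddBelow {η w1 w2 X Y : ℝ} (hη0 : 0 < η) (hη1 : η < 1)
    (hw1 : 0 < w1) (hw2 : 0 < w2) (hX : 0 < X) (hY : 0 < Y) :
    BddBelow (box η w1 w2 X Y) := by
  refine ⟨0, ?_⟩
  rintro v ⟨D, ⟨h1, h2, -⟩, rfl⟩
  have hη1' : (0 : ℝ) ≤ 1 - η := by linarith
  have d1n : (0 : ℝ) ≤ ((1 - η) + η * Y⁻¹) * X⁻¹ :=
    mul_nonneg (add_nonneg hη1' (mul_nonneg hη0.le (inv_nonneg.2 hY.le)))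
      (inv_nonneg.2 hX.le)
  have d2n : (0 : ℝ) ≤ ((1 - η) + η * X⁻¹) * Y⁻¹ :=
    mul_nonneg (add_nonneg hη1' (mul_nonneg hη0.le (inv_nonneg.2 hX.le)))
      (inv_nonneg.2 hY.le)
  exact add_nonneg (mul_nonneg hw1.le (d1n.trans h1)) (mul_nonneg hw2.le (d2n.trans h2))

private lemma sInf_box_le {η w1 w2 a b X X' Y Y' : ℝ}
    (hη0 : 0 < η) (hη1 : η < 1) (hw1 : 0 < w1) (hw2 : 0 < w2)
    (ha : 0 < a) (hb : 0 < b) (hab : a + b = 1)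
    (hX : 1 ≤ X) (hX' : 1 ≤ X') (hY : 1 ≤ Y) (hY' : 1 ≤ Y') :
    sInf (box η w1 w2 (a * X + b * X') (a * Y + b * Y')) ≤
      a * sInf (box η w1 w2 X Y) + b * sInf (box η w1 w2 X' Y') := by
  have hX0 : (0:ℝ) < X := by linarith
  have hX'0 : (0:ℝ) < X' := by linarith
  have hY0 : (0:ℝ) < Y := by linarith
  have hY'0 : (0:ℝ) < Y' := by linarith
  have hXm : 0 < a * X + b * X' := combo_pos ha.le hb.le hab hX0 hX'0
  have hYm : 0 < a * Y + b * Y' := combo_pos ha.le hb.le hab hY0 hY'0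
  have bdd_m := box_bddBelow (η := η) (w1 := w1) (w2 := w2) hη0 hη1 hw1 hw2 hXm hYm
  have ne_p := box_nonempty (η := η) (w1 := w1) (w2 := w2) hη0 hη1 hX hY
  have ne_q := box_nonempty (η := η) (w1 := w1) (w2 := w2) hη0 hη1 hX' hY'
  have key : ∀ v ∈ box η w1 w2 X Y, ∀ u ∈ box η w1 w2 X' Y',
      sInf (box η w1 w2 (a * X + b * X') (a * Y + b * Y')) ≤ a * v + b * u := by
    rintro v ⟨D, ⟨hD1, hD2, hD12⟩, rfl⟩ u ⟨E, ⟨hE1, hE2, hE12⟩, rfl⟩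
    have hc := core_combo hη0 hη1 ha.le hb.le hab hX0 hX'0 hY0 hY'0
      hD1 hD2 hD12 hE1 hE2 hE12
    refine csInf_le bdd_m ⟨(a * D.1 + b * E.1, a * D.2 + b * E.2),
      ⟨hc.1, hc.2.1, hc.2.2⟩, by dsimp only; ring⟩
  have step1 : ∀ v ∈ box η w1 w2 X Y,
      sInf (box η w1 w2 (a * X + b * X') (a * Y + b * Y')) ≤
        a * v + b * sInf (box η w1 w2 X' Y') := by
    intro v hv
    have h : (sInf (box η w1 w2 (a * X + b * X') (a * Y + b * Y')) - a * v) / b ≤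
        sInf (box η w1 w2 X' Y') :=
      le_csInf ne_q (fun u hu => by
        rw [div_le_iff₀ hb]; linarith [key v hv u hu])
    rw [div_le_iff₀ hb] at h
    linarith
  have h : (sInf (box η w1 w2 (a * X + b * X') (a * Y + b * Y')) -
      b * sInf (box η w1 w2 X' Y')) / a ≤ sInf (box η w1 w2 X Y) :=
    le_csInf ne_p (fun v hv => by
      rw [div_le_iff₀ ha]; linarith [step1 v hv])
  rw [div_le_iff₀ ha] at h
  linarith

/-- End of the proof of Proposition 1 of the paper: the minimum weighted-sum
distortion, viewed as a function of the transmit powers `(p1,p2)` via the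
Gaussian channel capacities `r_k = (1/2)·log2(1 + h_k·p_k)`, is convex on
`[0,∞)²`. -/
theorem Dmin_convex_in_powers (η w1 w2 h1 h2 : ℝ)
    (hη0 : 0 < η) (hη1 : η < 1)
    (hw0 : 0 < w1) (hw12 : w1 < w2) (hwsum : w1 + w2 = 1)
    (hh1 : 0 < h1) (hh2 : 0 < h2) :
    ConvexOn ℝ (Set.Ici (0 : ℝ) ×ˢ Set.Ici (0 : ℝ))
      (fun p : ℝ × ℝ =>
        Dmin η w1 w2 ((1 / 2) * Real.logb 2 (1 + h1 * p.1))
          ((1 / 2) * Real.logb 2 (1 + h2 * p.2))) := by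
  have hw2 : 0 < w2 := lt_trans hw0 hw12
  refine ⟨(convex_Ici 0).prod (convex_Ici 0), ?_⟩
  rintro p hp q hq a b ha hb hab
  rcases ha.eq_or_lt with h | ha'
  · have hb1 : b = 1 := by linarith
    simp [← h, hb1]
  rcases hb.eq_or_lt with h | hb'
  · have ha1 : a = 1 := by linarith
    simp [← h, ha1]
  obtain ⟨hp1, hp2⟩ := Set.mem_prod.mp hp
  obtain ⟨hq1, hq2⟩ := Set.mem_prod.mp hq
  rw [Set.mem_Ici] at hp1 hp2 hq1 hq2
  simp only [Prod.smul_fst, Prod.smul_snd, Prod.fst_add, Prod.snd_add, smul_eq_mul]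
  have hXp : (1:ℝ) ≤ 1 + h1 * p.1 := by nlinarith [mul_nonneg hh1.le hp1]
  have hXq : (1:ℝ) ≤ 1 + h1 * q.1 := by nlinarith [mul_nonneg hh1.le hq1]
  have hYp : (1:ℝ) ≤ 1 + h2 * p.2 := by nlinarith [mul_nonneg hh2.le hp2]
  have hYq : (1:ℝ) ≤ 1 + h2 * q.2 := by nlinarith [mul_nonneg hh2.le hq2]
  have hXmeq : (1:ℝ) + h1 * (a * p.1 + b * q.1)
      = a * (1 + h1 * p.1) + b * (1 + h1 * q.1) := by linear_combination -hab
  have hYmeq : (1:ℝ) + h2 * (a * p.2 + b * q.2)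
      = a * (1 + h2 * p.2) + b * (1 + h2 * q.2) := by linear_combination -hab
  rw [hXmeq, hYmeq]
  have hXm : 0 < a * (1 + h1 * p.1) + b * (1 + h1 * q.1) :=
    combo_pos ha hb hab (by linarith) (by linarith)
  have hYm : 0 < a * (1 + h2 * p.2) + b * (1 + h2 * q.2) :=
    combo_pos ha hb hab (by linarith) (by linarith)
  rw [Dmin_eq_box η w1 w2 _ _ hXm hYm,
    Dmin_eq_box η w1 w2 _ _ (by linarith : (0:ℝ) < 1 + h1 * p.1)
      (by linarith : (0:ℝ) < 1 + h2 * p.2),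
    Dmin_eq_box η w1 w2 _ _ (by linarith : (0:ℝ) < 1 + h1 * q.1)
      (by linarith : (0:ℝ) < 1 + h2 * q.2)]
  exact sInf_box_le hη0 hη1 hw0 hw2 ha' hb' hab hXp hXq hYp hYq
end

section
/- Let L ≥ 1 and T ≥ 1 be integers and 0 < α < 1. Let P_0, …, P_{T−1} be L×L real matrices with nonnegative entries whose rows each sum to 1, let d_0, …, d_{T−1} ∈ ℝ^L, and let v_0, …, v_T ∈ ℝ^L satisfy v_τ = (1−α)·d_τ + α·P_τ·v_{τ+1} for 0 ≤ τ ≤ T−1. Let μ_0 ∈ ℝ^L be a row vector with nonnegative entries summing to 1 and set μ_{τ+1} = μ_τ·P_τ for 0 ≤ τ ≤ T−1. Then μ_0·v_0 + (1−α)·Σ_{τ=1}^{T−1} μ_τ·v_τ − α·μ_T·v_T = (1−α)·Σ_{τ=0}^{T−1} μ_τ·d_τ. -/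
open Matrix

/-- The telescoping identity (equations (D.1)–(D.3)) in the proof of
Theorem 2 of the paper.  Here `μ τ` is the state distribution at time `τ`
(a row vector, propagated by `μ (τ+1) = μ τ · P τ`), `d τ` is the per-slot
distortion vector, and `v τ` is the cost vector of the tail policy starting
at slot `τ`, satisfying `v τ = (1−α)·d τ + α·P τ·v (τ+1)`.  Then
`μ 0 ⬝ v 0 + (1−α)·Σ_{τ=1}^{T−1} μ τ ⬝ v τ − α·μ T ⬝ v T
  = (1−α)·Σ_{τ=0}^{T−1} μ τ ⬝ d τ`. -/
theorem telescoping_cost_identity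
    (L T : ℕ) (hL : 1 ≤ L) (hT : 1 ≤ T)
    (α : ℝ) (hα0 : 0 < α) (hα1 : α < 1)
    (P : ℕ → Matrix (Fin L) (Fin L) ℝ)
    (hP : ∀ τ, τ < T → ∀ s t, 0 ≤ P τ s t)
    (hProw : ∀ τ, τ < T → ∀ s, ∑ t, P τ s t = 1)
    (d : ℕ → Fin L → ℝ) (v : ℕ → Fin L → ℝ)
    (hv : ∀ τ, τ < T → v τ = (1 - α) • d τ + α • (P τ *ᵥ v (τ + 1)))
    (μ : ℕ → Fin L → ℝ)
    (hμ0 : ∀ s, 0 ≤ μ 0 s) (hμ0sum : ∑ s, μ 0 s = 1)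
    (hμ : ∀ τ, τ < T → μ (τ + 1) = μ τ ᵥ* P τ) :
    μ 0 ⬝ᵥ v 0 + (1 - α) * ∑ τ ∈ Finset.Ico 1 T, μ τ ⬝ᵥ v τ
        - α * (μ T ⬝ᵥ v T) =
      (1 - α) * ∑ τ ∈ Finset.range T, μ τ ⬝ᵥ d τ := by
  set S : ℕ → ℝ := fun τ => μ τ ⬝ᵥ v τ with hS
  have key : ∀ τ, τ < T →
      S τ - α * S (τ + 1) = (1 - α) * (μ τ ⬝ᵥ d τ) := by
    intro τ hτ
    have h1 : S τ = (1 - α) * (μ τ ⬝ᵥ d τ) + α * S (τ + 1) := by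
      simp only [hS]
      rw [hv τ hτ, hμ τ hτ]
      rw [dotProduct_add, dotProduct_smul, dotProduct_smul,
        ← dotProduct_mulVec]
      simp [smul_eq_mul]
    rw [h1]; ring
  have hsum : ∑ τ ∈ Finset.range T, (S τ - α * S (τ + 1))
      = (1 - α) * ∑ τ ∈ Finset.range T, μ τ ⬝ᵥ d τ := by
    rw [Finset.mul_sum]
    exact Finset.sum_congr rfl fun τ hτ => key τ (Finset.mem_range.mp hτ)
  have hsplit : ∑ τ ∈ Finset.range T, S τ
      = S 0 + ∑ τ ∈ Finset.Ico 1 T, S τ := by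
    rw [Finset.range_eq_Ico, Finset.sum_eq_sum_Ico_succ_bot hT]
  have hshift : ∑ τ ∈ Finset.range T, S (τ + 1)
      = ∑ τ ∈ Finset.Ico 1 T, S τ + S T := by
    have : ∑ τ ∈ Finset.Ico 1 (T + 1), S τ
        = ∑ τ ∈ Finset.range T, S (τ + 1) := by
      rw [Finset.sum_Ico_eq_sum_range]
      simp [add_comm]
    rw [← this, Finset.sum_Ico_succ_top hT]
  rw [Finset.sum_sub_distrib, ← Finset.mul_sum, hsplit, hshift] at hsum
  linarith [hsum]
end
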